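/- arXiv:1611.06491 — 2 statements merged into one kernel-verified Lean document; each statement's English description precedes it below -/
import Mathlib

section
/- Let K = ℚ(ζ₈) be the 8th cyclotomic field with ring of integers ℤ_K, t = ζ₈, and let 𝔫 be the ideal of ℤ_K generated by -t³ - t - 6. Then the congruence subgroup Γ₀(𝔫) ≤ GL₂(ℤ_K) contains no element of order 3; that is, every g ∈ Γ₀(𝔫) with g³ = 1 satisfies g = 1. -/
/-!
Sending `ζ₈ ↦ 1` defines a ring map `φ : ℤ_K → 𝔽₂` (the prime above 2), and `φ(-t³ - t - 6) = 0`,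
so `Γ₀(𝔫) ⊆ Γ₀(ker φ)`. Let `g ∈ Γ₀(ker φ)` with `g³ = 1`, of trace `τ` and determinant `δ`.
Cayley–Hamilton gives `g³ = (τ² - δ) g - τδ`, so either `g` is scalar, hence `g = 1` because
`ℤ_K` has no primitive cube root of unity (`x² + x + 1` is odd for every `x`), or `τ = -1` and
`δ = 1`. In the latter case `g` is upper triangular modulo `ker φ` with determinant `1`, so both
diagonal entries reduce to `1 ∈ 𝔽₂` and `φ τ = 0`, contradicting `τ = -1`.
-/

open Matrix NumberField

/-- The congruence subgroup `Γ₀(I)` of `GL₂(R)`: invertible `2 × 2` matrices over `R`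
whose lower-left entry lies in the ideal `I`. -/
def Gamma0 {R : Type*} [CommRing R] (I : Ideal R) : Subgroup (GL (Fin 2) R) where
  carrier := { g | (g : Matrix (Fin 2) (Fin 2) R) 1 0 ∈ I }
  one_mem' := by
    simp [Matrix.one_apply_ne (show (1 : Fin 2) ≠ 0 by decide)]
  mul_mem' := by
    intro a b ha hb
    simp only [Set.mem_setOf_eq, Units.val_mul, Matrix.mul_apply, Fin.sum_univ_two] at *
    exact add_mem (I.mul_mem_right _ ha) (I.mul_mem_left _ hb)
  inv_mem' := by
    intro a ha
    simp only [Set.mem_setOf_eq] at *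
    rw [Matrix.coe_units_inv, Matrix.inv_def, Matrix.adjugate_fin_two, Matrix.smul_apply]
    have h10 : (!![(a : Matrix (Fin 2) (Fin 2) R) 1 1, -(a : Matrix (Fin 2) (Fin 2) R) 0 1;
        -(a : Matrix (Fin 2) (Fin 2) R) 1 0, (a : Matrix (Fin 2) (Fin 2) R) 0 0]) 1 0
        = -((a : Matrix (Fin 2) (Fin 2) R) 1 0) := by simp
    rw [h10, smul_eq_mul, mul_neg]
    exact I.neg_mem (I.mul_mem_left _ ha)

theorem Gamma0_mono {R : Type*} [CommRing R] {I J : Ideal R} (h : I ≤ J) :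
    Gamma0 I ≤ Gamma0 J :=
  fun _ hg => h hg

theorem sq_add_self_add_one_ne_zero_of_ringHom_zmod_two {R : Type*} [CommRing R]
    (φ : R →+* ZMod 2) (x : R) : x ^ 2 + x + 1 ≠ 0 := fun h => by
  have hodd : ∀ y : ZMod 2, y ^ 2 + y + 1 ≠ 0 := by decide
  exact hodd (φ x) (by simpa using congrArg φ h)

theorem eq_one_of_pow_three_eq_one {R : Type*} [CommRing R] [IsDomain R]
    (hR : ∀ x : R, x ^ 2 + x + 1 ≠ 0) {x : R} (hx : x ^ 3 = 1) : x = 1 := by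
  have : (x - 1) * (x ^ 2 + x + 1) = 0 := by linear_combination hx
  exact sub_eq_zero.mp ((mul_eq_zero.mp this).resolve_right (hR x))

theorem Matrix.pow_three_fin_two {R : Type*} [CommRing R] (M : Matrix (Fin 2) (Fin 2) R) :
    M ^ 3 = (M.trace ^ 2 - M.det) • M - (M.trace * M.det) • (1 : Matrix (Fin 2) (Fin 2) R) := by
  ext i j
  fin_cases i <;> fin_cases j <;>
    simp [pow_succ, mul_apply, Fin.sum_univ_two, trace_fin_two, det_fin_two] <;> ring

theorem Matrix.eq_scalar_of_smul_eq_smul_one {R : Type*} [CommRing R] [IsDomain R]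
    {M : Matrix (Fin 2) (Fin 2) R} {s r : R} (hs : s ≠ 0)
    (h : s • M = r • (1 : Matrix (Fin 2) (Fin 2) R)) : M = scalar (Fin 2) (M 0 0) := by
  have h' i j : s * M i j = r * (1 : Matrix (Fin 2) (Fin 2) R) i j := by
    simpa using congrFun (congrFun h i) j
  ext i j
  fin_cases i <;> fin_cases j <;> apply mul_left_cancel₀ hs <;> simp [h']

theorem Matrix.eq_one_or_trace_eq_neg_one_of_pow_three_eq_one {R : Type*} [CommRing R]
    [IsDomain R] (hR : ∀ x : R, x ^ 2 + x + 1 ≠ 0) {M : Matrix (Fin 2) (Fin 2) R}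
    (hM : M ^ 3 = 1) : M = 1 ∨ M.trace = -1 ∧ M.det = 1 := by
  set τ := M.trace
  set δ := M.det
  have hCH : (τ ^ 2 - δ) • M = (1 + τ * δ) • (1 : Matrix (Fin 2) (Fin 2) R) := by
    have h := M.pow_three_fin_two
    rw [hM] at h
    rw [add_smul, one_smul]
    exact sub_eq_iff_eq_add.mp h.symm
  by_cases hs : τ ^ 2 - δ = 0
  · have hτδ : 1 + τ * δ = 0 := by
      simpa [hs] using (congrFun (congrFun hCH 0) 0).symm
    have hτ : τ = -1 := by
      have := eq_one_of_pow_three_eq_one hR (x := -τ) (by linear_combination -hτδ - τ * hs)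
      linear_combination -this
    exact Or.inr ⟨hτ, by linear_combination -hs + (τ - 1) * hτ⟩
  · have hscalar := eq_scalar_of_smul_eq_smul_one hs hCH
    have hcube : M 0 0 ^ 3 = 1 := by
      rwa [hscalar, ← map_pow, ← (scalar (Fin 2)).map_one, scalar_inj] at hM
    rw [hscalar, eq_one_of_pow_three_eq_one hR hcube, map_one]
    exact Or.inl rfl

theorem Matrix.map_trace_eq_zero_of_det_eq_one {R : Type*} [CommRing R] (φ : R →+* ZMod 2)
    {M : Matrix (Fin 2) (Fin 2) R} (hc : φ (M 1 0) = 0) (hdet : M.det = 1) :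
    φ M.trace = 0 := by
  have h𝔽₂ : ∀ a b d : ZMod 2, a * d - b * 0 = 1 → a + d = 0 := by decide
  rw [det_fin_two] at hdet
  have hdet' := congrArg φ hdet
  simp only [map_sub, map_mul, hc, map_one] at hdet'
  simpa [trace_fin_two] using h𝔽₂ _ _ _ hdet'

theorem eq_one_of_mem_Gamma0_ker_of_pow_three_eq_one {R : Type*} [CommRing R] [IsDomain R]
    (φ : R →+* ZMod 2) {g : GL (Fin 2) R} (hg : g ∈ Gamma0 (RingHom.ker φ)) (h3 : g ^ 3 = 1) :
    g = 1 := by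
  have hM : (g : Matrix (Fin 2) (Fin 2) R) ^ 3 = 1 := by
    rw [← Units.val_pow_eq_pow_val, h3, Units.val_one]
  obtain h | ⟨htr, hdet⟩ := eq_one_or_trace_eq_neg_one_of_pow_three_eq_one
    (sq_add_self_add_one_ne_zero_of_ringHom_zmod_two φ) hM
  · exact Units.ext h
  · have htr' := map_trace_eq_zero_of_det_eq_one φ hg hdet
    rw [htr, map_neg, map_one] at htr'
    exact absurd htr' (by decide)

open Polynomial in
theorem IsPrimitiveRoot.exists_ringHom_ringOfIntegers_apply_eq {n : ℕ} [NeZero n] {K : Type*}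
    [Field K] [CharZero K] [IsCyclotomicExtension {n} ℚ K] {ζ : 𝓞 K} (hζ : IsPrimitiveRoot ζ n)
    {S : Type*} [CommRing S] {s : S} (hs : (cyclotomic n S).IsRoot s) :
    ∃ φ : 𝓞 K →+* S, φ ζ = s := by
  have hζK : IsPrimitiveRoot (ζ : K) n := hζ.map_of_injective RingOfIntegers.coe_injective
  let pb := hζK.integralPowerBasis
  have hgen : pb.gen = ζ := hζK.integralPowerBasis_gen
  have hmin : minpoly ℤ pb.gen = cyclotomic n ℤ := by
    rw [hgen, ← minpoly.algebraMap_eq RingOfIntegers.coe_injective,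
      cyclotomic_eq_minpoly hζK (NeZero.pos n)]
  have hroot : aeval s (minpoly ℤ pb.gen) = 0 := by
    rwa [hmin, aeval_def, eval₂_eq_eval_map, map_cyclotomic]
  exact ⟨pb.lift s hroot, hgen ▸ pb.lift_gen s hroot⟩

/-- In `K = ℚ(ζ_8)` with ring of integers `ℤ_K`, `t = ζ_8` and `𝔫 = (-t ^ 3 - t - 6)`,
the congruence subgroup `Γ₀(𝔫) ≤ GL₂(ℤ_K)` contains no element of order `3`:
every `g ∈ Γ₀(𝔫)` with `g³ = 1` satisfies `g = 1`. -/
theorem no_order_three (t : 𝓞 (CyclotomicField 8 ℚ)) (ht : IsPrimitiveRoot t 8) :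
    ∀ g ∈ Gamma0 (Ideal.span {(-t ^ 3 - t - 6 : 𝓞 (CyclotomicField 8 ℚ))}),
      g ^ 3 = 1 → g = 1 := by
  have : IsCyclotomicExtension {8} ℚ (CyclotomicField 8 ℚ) :=
    CyclotomicField.isCyclotomicExtension 8 ℚ
  have hroot : (Polynomial.cyclotomic (2 ^ (2 + 1)) (ZMod 2)).IsRoot 1 :=
    (Polynomial.eval_one_cyclotomic_prime_pow 2).trans (ZMod.natCast_self 2)
  obtain ⟨φ, hφt⟩ := ht.exists_ringHom_ringOfIntegers_apply_eq hroot
  have hlevel : Ideal.span {-t ^ 3 - t - 6} ≤ RingHom.ker φ := by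
    rw [Ideal.span_le, Set.singleton_subset_iff, SetLike.mem_coe, RingHom.mem_ker]
    simp only [map_sub, map_neg, map_pow, map_ofNat, hφt]
    decide
  exact fun g hg => eq_one_of_mem_Gamma0_ker_of_pow_three_eq_one φ (Gamma0_mono hlevel hg)
end

section
/- The polynomial X⁴ - X³ + 2X² + X + 1 is irreducible over ℚ and has no real roots; moreover, if t is any root of this polynomial in a field extension of ℚ, then (2t³ - 2t² + 6t + 1)² = -15. In particular the quartic number field K = ℚ(t) is totally imaginary and contains a square root of -15, hence contains the imaginary quadratic field ℚ(√-15). -/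
open Polynomial

/-!
With `f = X⁴ - X³ + 2X² + X + 1` one has `4 f(x) = (2x² - x)² + 3x² + (2x + 1)² + 3`, so `f` is
positive on every ordered ring: it has no real and no integer roots, and `ℚ[X]/(f)` does not embed
into `ℝ`. By Gauss's lemma irreducibility over `ℚ` reduces to `ℤ`; there a linear factor would give
an integer root, and a factorization `(X² + aX + b)(X² + cX + d)` forces `bd = 1`, `ad + bc = 1`,
`a + c = -1`, hence `b = d = -1` and `ac = 4`, i.e. `(a - c)² = -15`. Finally
`(2t³ - 2t² + 6t + 1)² + 15 = (4t² - 4t + 16) f(t)`.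
-/

theorem Polynomial.Monic.eq_X_sq_add_C_mul_X_add_C {R : Type*} [Semiring R] {p : R[X]}
    (hm : p.Monic) (hnd : p.natDegree = 2) : p = X ^ 2 + C (p.coeff 1) * X + C (p.coeff 0) := by
  conv_lhs => rw [hm.as_sum, hnd]
  simp only [Finset.sum_range_succ, Finset.sum_range_zero, pow_zero, pow_one, mul_one]
  abel

noncomputable def quartic (R : Type*) [CommRing R] : R[X] := X ^ 4 - X ^ 3 + 2 * X ^ 2 + X + 1

section CommRing

variable {R : Type*} [CommRing R]

@[simp]
theorem eval_quartic (x : R) : (quartic R).eval x = x ^ 4 - x ^ 3 + 2 * x ^ 2 + x + 1 := by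
  simp [quartic]

@[simp]
theorem map_quartic {S : Type*} [CommRing S] (f : R →+* S) : (quartic R).map f = quartic S := by
  simp [quartic]

theorem monic_quartic [Nontrivial R] : (quartic R).Monic := by
  unfold quartic; monicity!

theorem natDegree_quartic [Nontrivial R] : (quartic R).natDegree = 4 := by
  unfold quartic; compute_degree!

theorem quartic_pos [LinearOrder R] [IsStrictOrderedRing R] (x : R) :
    0 < x ^ 4 - x ^ 3 + 2 * x ^ 2 + x + 1 := by
  nlinarith [sq_nonneg (2 * x ^ 2 - x), sq_nonneg (2 * x + 1), sq_nonneg x]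

theorem sq_eq_neg_fifteen_of_quartic_eq_zero {t : R}
    (ht : t ^ 4 - t ^ 3 + 2 * t ^ 2 + t + 1 = 0) :
    (2 * t ^ 3 - 2 * t ^ 2 + 6 * t + 1) ^ 2 = -15 := by
  linear_combination (4 * t ^ 2 - 4 * t + 16) * ht

theorem root_quartic_eq_zero :
    AdjoinRoot.root (quartic R) ^ 4 - AdjoinRoot.root (quartic R) ^ 3
      + 2 * AdjoinRoot.root (quartic R) ^ 2 + AdjoinRoot.root (quartic R) + 1 = 0 := by
  simpa using AdjoinRoot.isRoot_root (quartic R)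

theorem isEmpty_ringHom_adjoinRoot_quartic (S : Type*) [CommRing S] [LinearOrder S]
    [IsStrictOrderedRing S] : IsEmpty (AdjoinRoot (quartic R) →+* S) := by
  refine ⟨fun φ => (quartic_pos (φ (AdjoinRoot.root _))).ne' ?_⟩
  simpa only [map_add, map_sub, map_mul, map_pow, map_one, map_zero, map_ofNat] using
    congrArg φ root_quartic_eq_zero

theorem exists_sq_eq_neg_fifteen_adjoinRoot_quartic :
    ∃ s : AdjoinRoot (quartic R), s ^ 2 = -15 :=
  ⟨_, sq_eq_neg_fifteen_of_quartic_eq_zero root_quartic_eq_zero⟩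

end CommRing

theorem quadratic_mul_quadratic_ne_quartic (a b c d : ℤ) :
    (X ^ 2 + C a * X + C b) * (X ^ 2 + C c * X + C d) ≠ quartic ℤ := by
  intro h
  have h0 := congrArg (coeff · 0) h
  have h1 := congrArg (coeff · 1) h
  have h2 := congrArg (coeff · 2) h
  have h3 := congrArg (coeff · 3) h
  simp only [quartic, coeff_mul, coeff_add, coeff_X_pow, coeff_X, coeff_C, coeff_sub,
    coeff_one] at h0 h1 h2 h3
  simp [Finset.Nat.antidiagonal_succ] at h0 h1 h2 h3
  rcases Int.eq_one_or_neg_one_of_mul_eq_one' h0 with ⟨rfl, rfl⟩ | ⟨rfl, rfl⟩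
  · omega
  · nlinarith [sq_nonneg (a - c)]

theorem irreducible_quartic_int : Irreducible (quartic ℤ) := by
  rw [monic_quartic.irreducible_iff_natDegree', natDegree_quartic]
  refine ⟨ne_of_apply_ne natDegree (by simp [natDegree_quartic]), fun f g hf hg hfg hdeg => ?_⟩
  have hdeg_sum : f.natDegree + g.natDegree = 4 := by
    rw [← hf.natDegree_mul hg, hfg, natDegree_quartic]
  obtain hg1 | hg2 : g.natDegree = 1 ∨ g.natDegree = 2 := by simp at hdeg; omega
  · have hroot : (quartic ℤ).IsRoot (-g.coeff 0) := by
      rw [← hfg, hg.eq_X_add_C hg1]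
      simp
    exact (quartic_pos (-g.coeff 0)).ne' (by simpa using hroot)
  · rw [hf.eq_X_sq_add_C_mul_X_add_C (by omega), hg.eq_X_sq_add_C_mul_X_add_C hg2] at hfg
    exact quadratic_mul_quadratic_ne_quartic _ _ _ _ hfg

theorem irreducible_quartic_rat : Irreducible (quartic ℚ) := by
  simpa using (IsPrimitive.Int.irreducible_iff_irreducible_map_cast
    monic_quartic.isPrimitive).mp irreducible_quartic_int

/-- The polynomial `X⁴ - X³ + 2X² + X + 1` is irreducible over `ℚ` and has no real
roots; moreover, for any root `t` of this polynomial in a field extension of `ℚ` one has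
`(2t³ - 2t² + 6t + 1)² = -15`. In particular the quartic number field `K = ℚ(t)` is
totally imaginary (it admits no embedding into `ℝ`) and contains a square root of `-15`,
hence contains the imaginary quadratic field `ℚ(√-15)`. -/
theorem quartic_field_contains_sqrt_neg_fifteen :
    Irreducible (X ^ 4 - X ^ 3 + 2 * X ^ 2 + X + 1 : ℚ[X]) ∧
    (∀ x : ℝ, x ^ 4 - x ^ 3 + 2 * x ^ 2 + x + 1 ≠ 0) ∧
    (∀ (L : Type) [Field L] [Algebra ℚ L] (t : L),
        t ^ 4 - t ^ 3 + 2 * t ^ 2 + t + 1 = 0 →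
          (2 * t ^ 3 - 2 * t ^ 2 + 6 * t + 1) ^ 2 = -15) ∧
    IsEmpty (AdjoinRoot (X ^ 4 - X ^ 3 + 2 * X ^ 2 + X + 1 : ℚ[X]) →+* ℝ) ∧
    (∃ s : AdjoinRoot (X ^ 4 - X ^ 3 + 2 * X ^ 2 + X + 1 : ℚ[X]), s ^ 2 = -15) :=
  ⟨irreducible_quartic_rat, fun x => (quartic_pos x).ne',
    fun _ _ _ _ => sq_eq_neg_fifteen_of_quartic_eq_zero, isEmpty_ringHom_adjoinRoot_quartic ℝ,
    exists_sq_eq_neg_fifteen_adjoinRoot_quartic⟩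
end
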